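/- arXiv:1803.01432 — 4 statements merged into one kernel-verified Lean document; each statement's English description precedes it below -/
import Mathlib

section
/- Let B be an additive category and let M = (M^i) be a cochain complex over B that, in the homotopy category K(B), is a retract of a complex concentrated in degree 0 (i.e., of M'[0] for some object M' of B). Then M is a retract in K(B) of the complex M^0[0] (its own degree-zero term placed in degree 0). -/
open CategoryTheory Limits

universe v u

/-!
Lift the retraction to chain maps `f : M ⟶ M'[0]` and `g : M'[0] ⟶ M`, so that
`𝟙 = (f ≫ g) ≫ (f ≫ g)` in `K(B)`. The middle composite `g ≫ f` is an endomorphism of `M'[0]`,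
i.e. the morphism `g⁰ ≫ f⁰ : M' ⟶ M'` placed in degree `0`, and it visibly factors through
`M⁰[0]`; hence so does `𝟙 M`.
-/

namespace CategoryTheory.Retract

variable {C : Type*} [Category C] {X Y Z : C}

def ofFactorization (h : Retract X Y) {a : Y ⟶ Z} {b : Z ⟶ Y} (hab : h.r ≫ h.i = a ≫ b) :
    Retract X Z where
  i := h.i ≫ a
  r := b ≫ h.r
  retract := by
    rw [Category.assoc, ← Category.assoc a, ← hab, Category.assoc, h.retract_assoc, h.retract]

end CategoryTheory.Retract

namespace HomologicalComplex

variable {V : Type*} [Category V] [HasZeroMorphisms V] [HasZeroObject V]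
  {ι : Type*} [DecidableEq ι] {c : ComplexShape ι}

lemma comp_eq_single_map_comp_single_map {K : HomologicalComplex V c} {j : ι} {A B : V}
    (g : (single V c j).obj A ⟶ K) (f : K ⟶ (single V c j).obj B) :
    g ≫ f = (single V c j).map ((singleObjXSelf c j A).inv ≫ g.f j) ≫
      (single V c j).map (f.f j ≫ (singleObjXSelf c j B).hom) := by
  ext
  simp [single_map_f_self]

end HomologicalComplex

/-- if a cochain complex `M` over an additive category `B` is a
retract, in the homotopy category `K(B)`, of a complex `M'[0]` concentrated in
degree `0`, then `M` is a retract in `K(B)` of `(M.X 0)[0]`, i.e. of its own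
degree-zero term placed in degree `0`. -/
theorem stmt0 {B : Type u} [Category.{v} B] [Preadditive B] [HasZeroObject B]
    (M : CochainComplex B ℤ) (M' : B)
    (h : ∃ (i : (HomotopyCategory.quotient B (ComplexShape.up ℤ)).obj M ⟶
            (HomotopyCategory.quotient B (ComplexShape.up ℤ)).obj
              ((HomologicalComplex.single B (ComplexShape.up ℤ) 0).obj M'))
         (r : (HomotopyCategory.quotient B (ComplexShape.up ℤ)).obj
              ((HomologicalComplex.single B (ComplexShape.up ℤ) 0).obj M') ⟶
            (HomotopyCategory.quotient B (ComplexShape.up ℤ)).obj M),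
         i ≫ r = 𝟙 ((HomotopyCategory.quotient B (ComplexShape.up ℤ)).obj M)) :
    ∃ (i : (HomotopyCategory.quotient B (ComplexShape.up ℤ)).obj M ⟶
            (HomotopyCategory.quotient B (ComplexShape.up ℤ)).obj
              ((HomologicalComplex.single B (ComplexShape.up ℤ) 0).obj (M.X 0)))
      (r : (HomotopyCategory.quotient B (ComplexShape.up ℤ)).obj
              ((HomologicalComplex.single B (ComplexShape.up ℤ) 0).obj (M.X 0)) ⟶
            (HomotopyCategory.quotient B (ComplexShape.up ℤ)).obj M),
      i ≫ r = 𝟙 ((HomotopyCategory.quotient B (ComplexShape.up ℤ)).obj M) := by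
  set Q := HomotopyCategory.quotient B (ComplexShape.up ℤ)
  obtain ⟨i, r, hir⟩ := h
  obtain ⟨f, rfl⟩ := Q.map_surjective i
  obtain ⟨g, rfl⟩ := Q.map_surjective r
  let R := (Retract.mk _ _ hir).ofFactorization
    (Z := Q.obj ((HomologicalComplex.single B (ComplexShape.up ℤ) 0).obj (M.X 0))) (by
    rw [← Q.map_comp, HomologicalComplex.comp_eq_single_map_comp_single_map, Q.map_comp])
  exact ⟨R.i, R.r, R.retract⟩
end

section
/- Let C and D be triangulated categories equipped with weight structures w and v respectively, and let F : C \to D and G : D \to C be exact functors with F left adjoint to G. Then F is left weight-exact (i.e., F(C_{w\le 0}) \subseteq D_{v\le 0}) if and only if G is right weight-exact (i.e., G(D_{v\ge 0}) \subseteq C_{w\ge 0}). -/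
open CategoryTheory Limits Pretriangulated Opposite

universe v u v₂ u₂

variable (C : Type u) [Category.{v} C] [Preadditive C] [HasZeroObject C] [HasShift C ℤ]
  [∀ n : ℤ, (shiftFunctor C n).Additive] [Pretriangulated C]

/-- A weight structure on a triangulated category (Bondarko, homological convention). -/
structure WeightStructure where
  le : Set C
  ge : Set C
  le_retract : ∀ ⦃X Y : C⦄, X ∈ le → ∀ (i : Y ⟶ X) (r : X ⟶ Y), i ≫ r = 𝟙 Y → Y ∈ le
  ge_retract : ∀ ⦃X Y : C⦄, X ∈ ge → ∀ (i : Y ⟶ X) (r : X ⟶ Y), i ≫ r = 𝟙 Y → Y ∈ ge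
  le_shift : ∀ ⦃X : C⦄, X ∈ le → X⟦(-1 : ℤ)⟧ ∈ le
  ge_shift : ∀ ⦃X : C⦄, X ∈ ge → X⟦(1 : ℤ)⟧ ∈ ge
  orthogonal : ∀ ⦃X Y : C⦄, X ∈ le → Y⟦(-1 : ℤ)⟧ ∈ ge → ∀ f : X ⟶ Y, f = 0
  decomp : ∀ M : C, ∃ (X Y : C) (f : X ⟶ M) (g : M ⟶ Y) (h : Y ⟶ X⟦(1 : ℤ)⟧),
    Triangle.mk f g h ∈ (distTriang C) ∧ X ∈ le ∧ Y⟦(-1 : ℤ)⟧ ∈ ge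

/-!
Both exactness conditions are orthogonality conditions. In a weight structure each half is the
orthogonal of the other: `Y ∈ ge` iff `X ⟶ Y⟦1⟧` vanishes for all `X ∈ le`, and dually (a weight
decomposition of `Y⟦1⟧`, resp. `X`, with one vanishing map exhibits the object as a retract of a
member). The adjunction, together with `G (Y⟦1⟧) ≅ (G Y)⟦1⟧`, identifies `F X ⟶ Y⟦1⟧` with
`X ⟶ (G Y)⟦1⟧`, so either condition says that these hom-sets vanish for `X ∈ le`, `Y ∈ ge`.
-/

lemma CategoryTheory.Adjunction.subsingleton_hom_shift_iff {C' D' : Type*} [Category C']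
    [Category D'] {M : Type*} [AddMonoid M] [HasShift C' M] [HasShift D' M]
    {F : C' ⥤ D'} {G : D' ⥤ C'} [G.CommShift M] (adj : F ⊣ G) (X : C') (Y : D') (a : M) :
    Subsingleton (F.obj X ⟶ Y⟦a⟧) ↔ Subsingleton (X ⟶ (G.obj Y)⟦a⟧) :=
  ((adj.homEquiv X _).trans
    (Iso.homCongr (Iso.refl X) ((G.commShiftIso a).app Y))).subsingleton_congr

namespace WeightStructure

variable {C} (w : WeightStructure C)

lemma mem_le_of_retract {X Y : C} (h : Retract Y X) (hX : X ∈ w.le) : Y ∈ w.le :=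
  w.le_retract hX h.i h.r h.retract

lemma mem_ge_of_retract {X Y : C} (h : Retract Y X) (hX : X ∈ w.ge) : Y ∈ w.ge :=
  w.ge_retract hX h.i h.r h.retract

lemma subsingleton_hom_shift_one {X Y : C} (hX : X ∈ w.le) (hY : Y ∈ w.ge) :
    Subsingleton (X ⟶ Y⟦(1 : ℤ)⟧) :=
  have hY' : (Y⟦(1 : ℤ)⟧)⟦(-1 : ℤ)⟧ ∈ w.ge :=
    w.mem_ge_of_retract (.ofIso (shiftShiftNeg Y 1)) hY
  ⟨fun f g => (w.orthogonal hX hY' f).trans (w.orthogonal hX hY' g).symm⟩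

lemma mem_ge_iff (Y : C) : Y ∈ w.ge ↔ ∀ X ∈ w.le, Subsingleton (X ⟶ Y⟦(1 : ℤ)⟧) := by
  refine ⟨fun hY X hX => w.subsingleton_hom_shift_one hX hY, fun H => ?_⟩
  obtain ⟨A, B, f, g, h, hT, hA, hB⟩ := w.decomp (Y⟦(1 : ℤ)⟧)
  obtain ⟨r, hr⟩ := Triangle.yoneda_exact₂ _ hT (𝟙 _) ((H A hA).allEq _ _)
  have hYB : Retract (Y⟦(1 : ℤ)⟧) B := ⟨g, r, hr.symm⟩
  exact w.mem_ge_of_retract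
    ((Retract.ofIso (shiftShiftNeg Y 1).symm).trans (hYB.map (shiftFunctor C (-1)))) hB

lemma mem_le_iff (X : C) : X ∈ w.le ↔ ∀ Y ∈ w.ge, Subsingleton (X ⟶ Y⟦(1 : ℤ)⟧) := by
  refine ⟨fun hX Y hY => w.subsingleton_hom_shift_one hX hY, fun H => ?_⟩
  obtain ⟨A, B, f, g, h, hT, hA, hB⟩ := w.decomp X
  have hXB : Subsingleton (X ⟶ B) :=
    (Iso.homCongr (Iso.refl X) (shiftNegShift B 1)).subsingleton_congr.1 (H _ hB)
  obtain ⟨i, hi⟩ := Triangle.coyoneda_exact₂ _ hT (𝟙 X) (hXB.allEq _ _)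
  exact w.mem_le_of_retract ⟨i, f, hi.symm⟩ hA

end WeightStructure

/-- for an adjunction `F ⊣ G` of exact functors between triangulated
categories with weight structures, `F` is left weight-exact iff `G` is right weight-exact. -/
theorem stmt8 {D : Type u₂} [Category.{v₂} D] [Preadditive D] [HasZeroObject D] [HasShift D ℤ]
    [∀ n : ℤ, (shiftFunctor D n).Additive] [Pretriangulated D]
    (w : WeightStructure C) (v : WeightStructure D)
    (F : C ⥤ D) (G : D ⥤ C) [F.CommShift ℤ] [F.IsTriangulated]
    [G.CommShift ℤ] [G.IsTriangulated] (adj : F ⊣ G) :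
    (∀ X : C, X ∈ w.le → F.obj X ∈ v.le) ↔ (∀ Y : D, Y ∈ v.ge → G.obj Y ∈ w.ge) := by
  constructor
  · intro hF Y hY
    rw [w.mem_ge_iff]
    exact fun X hX => (adj.subsingleton_hom_shift_iff X Y 1).1
      (v.subsingleton_hom_shift_one (hF X hX) hY)
  · intro hG X hX
    rw [v.mem_le_iff]
    exact fun Y hY => (adj.subsingleton_hom_shift_iff X Y 1).2
      (w.subsingleton_hom_shift_one hX (hG Y hY))
end

section
/- Let C be a triangulated category with a weight structure w and let H : C^{op} \to A be a cohomological functor into an abelian category A. For an object M and an integer m, the subobject (W^m H)(M) := Im(H(w_{\ge m}M) \to H(M)) of H(M) does not depend on the choice of the weight decomposition defining w_{\ge m}M, and it equals Ker(H(M) \to H(w_{\le m-1}M)) for any choice of w_{\le m-1}M. -/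
/-! The weight filtration is well defined because any two weight decompositions of `M` at `m`
dominate each other: since `C_{w ≤ m-1} ⟂ C_{w ≥ m}`, the map `M → w_{≥ m}M` of either
decomposition kills `w_{≤ m-1}M` of the other, hence factors through the other `M → w_{≥ m}M`.
The identification with the kernel is exactness of `H` at the middle of the triangle. -/

open CategoryTheory Limits Pretriangulated Opposite

universe v u v₂ u₂

variable (C : Type u) [Category.{v} C] [Preadditive C] [HasZeroObject C] [HasShift C ℤ]
  [∀ n : ℤ, (shiftFunctor C n).Additive] [Pretriangulated C]

theorem imageSubobject_map_op_comp_le {D : Type*} [Category D] {A : Type*} [Category A]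
    [HasImages A] (F : Dᵒᵖ ⥤ A) {M Y Y' : D} (b : M ⟶ Y) (v : Y ⟶ Y') :
    imageSubobject (F.map (b ≫ v).op) ≤ imageSubobject (F.map b.op) := by
  rw [op_comp, F.map_comp]
  exact imageSubobject_comp_le _ _

section

variable {C}

namespace WeightStructure

theorem hom_eq_zero (w : WeightStructure C) (m : ℤ) {X Y : C}
    (hX : X⟦(1 - m : ℤ)⟧ ∈ w.le) (hY : Y⟦(-m : ℤ)⟧ ∈ w.ge) (f : X ⟶ Y) : f = 0 := by
  have e : Y⟦(-m : ℤ)⟧ ≅ (Y⟦(1 - m : ℤ)⟧)⟦(-1 : ℤ)⟧ :=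
    (shiftFunctorAdd' C (1 - m) (-1) (-m) (by ring)).app Y
  have hY₁ : (Y⟦(1 - m : ℤ)⟧)⟦(-1 : ℤ)⟧ ∈ w.ge := w.ge_retract hY e.inv e.hom (by simp)
  apply (shiftFunctor C (1 - m : ℤ)).map_injective
  rw [w.orthogonal hX hY₁ ((shiftFunctor C (1 - m : ℤ)).map f), Functor.map_zero]

theorem exists_factor_of_mem_ge (w : WeightStructure C) (m : ℤ) {X M Y Y' : C}
    (a : X ⟶ M) (b : M ⟶ Y) (c : Y ⟶ X⟦(1 : ℤ)⟧) (hT : Triangle.mk a b c ∈ distTriang C)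
    (hX : X⟦(1 - m : ℤ)⟧ ∈ w.le) (b' : M ⟶ Y') (hY' : Y'⟦(-m : ℤ)⟧ ∈ w.ge) :
    ∃ v : Y ⟶ Y', b' = b ≫ v :=
  Triangle.yoneda_exact₂ _ hT b' (w.hom_eq_zero m hX hY' _)

end WeightStructure

theorem imageSubobject_map_mor₂_op_eq_kernelSubobject {A : Type*} [Category A] [Abelian A]
    (H : Cᵒᵖ ⥤ A)
    (hH : ∀ (T : Triangle C), T ∈ (distTriang C) →
      ∃ z : H.map T.mor₂.op ≫ H.map T.mor₁.op = 0, (ShortComplex.mk _ _ z).Exact)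
    (T : Triangle C) (hT : T ∈ distTriang C) :
    imageSubobject (H.map T.mor₂.op) = kernelSubobject (H.map T.mor₁.op) := by
  obtain ⟨_, hExact⟩ := hH T hT
  exact (ShortComplex.exact_iff_image_eq_kernel _).mp hExact

end

theorem stmt14 (w : WeightStructure C)
    {A : Type u₂} [Category.{v₂} A] [Abelian A]
    (H : Cᵒᵖ ⥤ A)
    (hH : ∀ (T : Triangle C), T ∈ (distTriang C) →
      ∃ z : H.map T.mor₂.op ≫ H.map T.mor₁.op = 0, (ShortComplex.mk _ _ z).Exact)
    (M : C) (m : ℤ)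
    {X Y X' Y' : C}
    (a : X ⟶ M) (b : M ⟶ Y) (c : Y ⟶ X⟦(1 : ℤ)⟧)
    (hT : Triangle.mk a b c ∈ distTriang C)
    (hX : X⟦(1 - m : ℤ)⟧ ∈ w.le) (hY : Y⟦(-m : ℤ)⟧ ∈ w.ge)
    (a' : X' ⟶ M) (b' : M ⟶ Y') (c' : Y' ⟶ X'⟦(1 : ℤ)⟧)
    (hT' : Triangle.mk a' b' c' ∈ distTriang C)
    (hX' : X'⟦(1 - m : ℤ)⟧ ∈ w.le) (hY' : Y'⟦(-m : ℤ)⟧ ∈ w.ge) :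
    imageSubobject (H.map b.op) = imageSubobject (H.map b'.op) ∧
    imageSubobject (H.map b.op) = kernelSubobject (H.map a.op) := by
  obtain ⟨v, hv⟩ := w.exists_factor_of_mem_ge m a b c hT hX b' hY'
  obtain ⟨v', hv'⟩ := w.exists_factor_of_mem_ge m a' b' c' hT' hX' b hY
  refine ⟨le_antisymm ?_ ?_, imageSubobject_map_mor₂_op_eq_kernelSubobject H hH _ hT⟩
  · rw [hv']
    exact imageSubobject_map_op_comp_le H b' v'
  · rw [hv]
    exact imageSubobject_map_op_comp_le H b v
end

section
/- Let C be a triangulated category with a weight structure w, let M \in C_{w=0}, and suppose M has a weight Postnikov tower with w_{\le i}M = 0 for all i < 0, with associated weight complex t(M) = (\cdots \to M^{-1} \to M^0 \to 0 \to \cdots) concentrated in non-positive degrees. Then there exist objects N^j \in C_{w=0} for j \le 0 such that t(M) is isomorphic, as an object of the category of complexes C(Hw) up to the stated decomposition, to M[0] \oplus \bigoplus_{j \le 0} (N^j \xrightarrow{id} N^j)[-j], i.e., t(M) is the direct sum of M concentrated in degree 0 and contractible two-term complexes. -/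
/-!
Write `f = e.hom`, `g = e.inv` and `h` for the homotopy `f ≫ g ∼ 𝟙`. Homotopies of `M[0]`
vanish, so `g ≫ f = 𝟙` and `f ≫ g` is an idempotent splitting off `M[0]^m` from `X^m`.
The rest of `X^m` is split by descending induction on `m`, starting from `X^1 = 0`: given a
summand `N^{m+1}` of `X^{m+1}` made of cycles killed by `f`, the map `σ = -ι ≫ h` is a section of
`d ≫ π : X^m → N^{m+1}`, so `𝟙 - f ≫ g - (d ≫ π) ≫ σ` is an idempotent of `X^m`; its image `N^m`
exists because `C` is Karoubian. This gives `X^m ≅ M[0]^m ⊕ N^m ⊕ N^{m+1}`, compatibly with the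
differentials, and each `N^m`, a retract of `X^m`, lies in the heart.
-/

open CategoryTheory Limits Pretriangulated Opposite

universe v u

variable (C : Type u) [Category.{v} C] [Preadditive C] [HasZeroObject C] [HasShift C ℤ]
  [∀ n : ℤ, (shiftFunctor C n).Additive] [Pretriangulated C]

variable [HasBinaryBiproducts C]

/-- The `n`-th term of the complex `M[0] ⊕ ⨁_{j ≤ 0} (N^j ⟶ N^j)[-j]`
(for `N j` zero for `j > 0`): it is `M` in degree `0` plus `N n ⊞ N (n+1)`. -/
noncomputable def sumX (M : C) (N : ℤ → C) (n : ℤ) : C :=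
  ((HomologicalComplex.single C (ComplexShape.up ℤ) 0).obj M).X n ⊞ (N n ⊞ N (n + 1))

/-- The complex `M[0] ⊕ ⨁_j (N^j ⟶ N^j)[-j]`: the direct sum of `M` placed in
degree `0` and of the contractible two-term complexes `N^j = N^j` placed in
degrees `j-1, j`. -/
noncomputable def sumCx (M : C) (N : ℤ → C) : CochainComplex C ℤ where
  X := sumX C M N
  d i j :=
    if h : i + 1 = j then
      (biprod.map (0 : _ ⟶ _) (biprod.snd ≫ biprod.inl) :
        sumX C M N i ⟶ sumX C M N (i + 1)) ≫ eqToHom (congrArg (sumX C M N) h)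
    else 0
  shape i j h := dif_neg h
  d_comp_d' := by
    intro i j k hij hjk
    change i + 1 = j at hij
    change j + 1 = k at hjk
    subst hij; subst hjk
    rw [dif_pos rfl, dif_pos rfl]
    have key : ∀ (A B D X Y Z W : C), (biprod.map (0 : A ⟶ B) (biprod.snd ≫ biprod.inl : X ⊞ Y ⟶ Y ⊞ Z) ≫ eqToHom rfl) ≫
        (biprod.map (0 : B ⟶ D) (biprod.snd ≫ biprod.inl : Y ⊞ Z ⟶ Z ⊞ W) ≫ eqToHom rfl) = 0 := by
      intros; refine biprod.hom_ext _ _ ?_ ?_ <;> simp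
    exact key _ _ _ _ _ _ _

open HomologicalComplex

section SingleComplex

variable {C : Type u} [Category.{v} C] [Preadditive C] [HasZeroObject C]
  {ι : Type*} [DecidableEq ι] {c : ComplexShape ι} {j : ι} {M : C} {X : HomologicalComplex C c}

lemma HomologicalComplex.d_comp_f_of_single (φ : X ⟶ (single C c j).obj M) (k l : ι) :
    X.d k l ≫ φ.f l = 0 := by
  rw [← φ.comm, single_obj_d, comp_zero]

lemma HomologicalComplex.f_comp_d_of_single (φ : (single C c j).obj M ⟶ X) (k l : ι) :
    φ.f k ≫ X.d k l = 0 := by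
  rw [φ.comm, single_obj_d, zero_comp]

lemma HomotopyEquiv.inv_f_comp_hom_f_of_single (e : HomotopyEquiv X ((single C c j).obj M))
    (i : ι) : e.inv.f i ≫ e.hom.f i = 𝟙 _ := by
  simpa [dNext, prevD] using e.homotopyInvHomId.comm i

end SingleComplex

lemma sumCx_d {C : Type u} [Category.{v} C] [Preadditive C] [HasZeroObject C]
    [HasBinaryBiproducts C] (M : C) (N : ℤ → C) (i : ℤ) :
    (sumCx C M N).d i (i + 1) =
      (biprod.map 0 (biprod.snd ≫ biprod.inl) : sumX C M N i ⟶ sumX C M N (i + 1)) := by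
  dsimp only [sumCx]
  rw [dif_pos rfl]
  exact Category.comp_id _

section

variable {C : Type u} [Category.{v} C] [Preadditive C] [HasZeroObject C] {M : C}
  {X : CochainComplex C ℤ} (e : HomotopyEquiv X ((single C (ComplexShape.up ℤ) 0).obj M))

/-- A summand `N^m` of `X^m` consisting of cycles killed by `e.hom` and containing the boundaries.
It is the degree-`m` end of the contractible piece `N^m = N^m` sitting in degrees `m - 1, m`. -/
structure BoundarySummand (m : ℤ) where
  N : C
  ι : N ⟶ X.X m
  π : X.X m ⟶ N
  ι_π : ι ≫ π = 𝟙 N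
  ι_d (k : ℤ) : ι ≫ X.d m k = 0
  ι_hom_f : ι ≫ e.hom.f m = 0
  d_π_ι (k : ℤ) : X.d k m ≫ π ≫ ι = X.d k m

namespace BoundarySummand

variable {e} {m : ℤ}

def ofIsZero (hm : IsZero (X.X m)) : BoundarySummand e m where
  N := X.X m
  ι := 𝟙 _
  π := 𝟙 _
  ι_π := Category.id_comp _
  ι_d _ := hm.eq_of_src _ _
  ι_hom_f := hm.eq_of_src _ _
  d_π_ι _ := hm.eq_of_tgt _ _

variable (S : BoundarySummand e (m + 1))


noncomputable def σ : S.N ⟶ X.X m := -(S.ι ≫ e.homotopyHomInvId.hom (m + 1) m)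

noncomputable def idem : X.X m ⟶ X.X m :=
  𝟙 _ - e.hom.f m ≫ e.inv.f m - (X.d m (m + 1) ≫ S.π) ≫ S.σ

lemma σ_d : S.σ ≫ X.d m (m + 1) = S.ι := by
  have h := congrArg (S.ι ≫ ·) (e.homotopyHomInvId.comm (m + 1))
  rw [prevD_eq _ (show (ComplexShape.up ℤ).Rel m (m + 1) from rfl)] at h
  simp only [comp_f, reassoc_of% S.ι_hom_f, zero_comp, dNext, AddMonoidHom.mk'_apply, id_f,
    Preadditive.comp_add, reassoc_of% S.ι_d, zero_add, Category.comp_id] at h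
  rw [σ, Preadditive.neg_comp, Category.assoc]
  exact neg_eq_of_add_eq_zero_right h.symm

lemma σ_d_π : S.σ ≫ X.d m (m + 1) ≫ S.π = 𝟙 S.N := by
  rw [← Category.assoc, σ_d, ι_π]

lemma idem_d : S.idem ≫ X.d m (m + 1) = 0 := by
  simp [idem, S.σ_d, S.d_π_ι]

lemma d_idem (k : ℤ) : X.d k m ≫ S.idem = X.d k m := by
  simp [idem, reassoc_of% d_comp_f_of_single]

lemma inv_f_idem : e.inv.f m ≫ S.idem = 0 := by
  simp [idem, reassoc_of% e.inv_f_comp_hom_f_of_single, reassoc_of% f_comp_d_of_single]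

lemma σ_hom_f (h₁ : IsZero (X.X 1)) : S.σ ≫ e.hom.f m = 0 := by
  obtain rfl | hm := eq_or_ne m 0
  · rw [σ, Preadditive.neg_comp, Category.assoc, h₁.eq_of_src (_ ≫ e.hom.f 0) 0]
    simp
  · exact (isZero_single_obj_X _ _ _ _ hm).eq_of_tgt _ _

lemma idem_hom_f (h₁ : IsZero (X.X 1)) : S.idem ≫ e.hom.f m = 0 := by
  simp [idem, e.inv_f_comp_hom_f_of_single, S.σ_hom_f h₁]

lemma idem_idem (h₁ : IsZero (X.X 1)) : S.idem ≫ S.idem = S.idem := by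
  conv_lhs => arg 2; rw [idem]
  simp [reassoc_of% S.idem_hom_f h₁, reassoc_of% S.idem_d]

lemma σ_idem (h₁ : IsZero (X.X 1)) : S.σ ≫ S.idem = 0 := by
  simp [idem, reassoc_of% S.σ_hom_f h₁, reassoc_of% S.σ_d_π]

def ofSplit (h₁ : IsZero (X.X 1)) {N : C} (ι : N ⟶ X.X m) (π : X.X m ⟶ N) (ι_π : ι ≫ π = 𝟙 N)
    (π_ι : π ≫ ι = S.idem) : BoundarySummand e m :=
  have ι_idem : ι ≫ S.idem = ι := by rw [← π_ι, ← Category.assoc, ι_π, Category.id_comp]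
  { N, ι, π, ι_π
    ι_d := fun k => by
      obtain rfl | hk := eq_or_ne k (m + 1)
      · rw [← ι_idem, Category.assoc, S.idem_d, comp_zero]
      · rw [X.shape _ _ (by simpa [eq_comm] using hk), comp_zero]
    ι_hom_f := by rw [← ι_idem, Category.assoc, S.idem_hom_f h₁, comp_zero]
    d_π_ι := fun k => by rw [π_ι, S.d_idem] }

variable [IsIdempotentComplete C]

noncomputable def pred (h₁ : IsZero (X.X 1)) : BoundarySummand e m :=
  have split := IsIdempotentComplete.idempotents_split _ S.idem (S.idem_idem h₁)
  S.ofSplit h₁ _ _ split.choose_spec.choose_spec.choose_spec.1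
    split.choose_spec.choose_spec.choose_spec.2

lemma pred_π_ι (h₁ : IsZero (X.X 1)) : (S.pred h₁).π ≫ (S.pred h₁).ι = S.idem :=
  (IsIdempotentComplete.idempotents_split _ S.idem
    (S.idem_idem h₁)).choose_spec.choose_spec.choose_spec.2

end BoundarySummand

variable [IsIdempotentComplete C] (hpos : ∀ n : ℤ, 0 < n → IsZero (X.X n))

noncomputable def boundarySummand (m : ℤ) : BoundarySummand e m :=
  if hm : 0 < m then .ofIsZero (hpos m hm)
  else (boundarySummand (m + 1)).pred (hpos 1 one_pos)
termination_by (1 - m).toNat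

lemma boundarySummand_of_nonpos {m : ℤ} (hm : m ≤ 0) :
    boundarySummand e hpos m = (boundarySummand e hpos (m + 1)).pred (hpos 1 one_pos) := by
  rw [boundarySummand, dif_neg (not_lt.mpr hm)]

lemma boundarySummand_π_ι (m : ℤ) :
    (boundarySummand e hpos m).π ≫ (boundarySummand e hpos m).ι =
      (boundarySummand e hpos (m + 1)).idem := by
  obtain hm | hm := lt_or_ge 0 m
  · exact (hpos m hm).eq_of_src _ _
  · rw [boundarySummand_of_nonpos e hpos hm]
    exact BoundarySummand.pred_π_ι _ _

lemma id_eq_add_boundarySummand (m : ℤ) :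
    𝟙 (X.X m) = e.hom.f m ≫ e.inv.f m +
      (boundarySummand e hpos m).π ≫ (boundarySummand e hpos m).ι +
      (X.d m (m + 1) ≫ (boundarySummand e hpos (m + 1)).π) ≫
        (boundarySummand e hpos (m + 1)).σ := by
  rw [boundarySummand_π_ι, BoundarySummand.idem]
  abel

lemma idem_comp_boundarySummand_π (m : ℤ) :
    (boundarySummand e hpos (m + 1)).idem ≫ (boundarySummand e hpos m).π =
      (boundarySummand e hpos m).π := by
  rw [← boundarySummand_π_ι, Category.assoc, BoundarySummand.ι_π, Category.comp_id]

lemma inv_f_comp_boundarySummand_π (m : ℤ) : e.inv.f m ≫ (boundarySummand e hpos m).π = 0 := by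
  rw [← idem_comp_boundarySummand_π, reassoc_of% BoundarySummand.inv_f_idem, zero_comp]

lemma σ_comp_boundarySummand_π (m : ℤ) :
    (boundarySummand e hpos (m + 1)).σ ≫ (boundarySummand e hpos m).π = 0 := by
  rw [← idem_comp_boundarySummand_π, reassoc_of% BoundarySummand.σ_idem _ (hpos 1 one_pos),
    zero_comp]

variable [HasBinaryBiproducts C]

noncomputable def isoSumX (m : ℤ) :
    X.X m ≅ ((single C (ComplexShape.up ℤ) 0).obj M).X m ⊞
      ((boundarySummand e hpos m).N ⊞ (boundarySummand e hpos (m + 1)).N) where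
  hom := biprod.lift (e.hom.f m) (biprod.lift (boundarySummand e hpos m).π
    (X.d m (m + 1) ≫ (boundarySummand e hpos (m + 1)).π))
  inv := biprod.desc (e.inv.f m)
    (biprod.desc (boundarySummand e hpos m).ι (boundarySummand e hpos (m + 1)).σ)
  hom_inv_id := by
    rw [biprod.lift_desc, biprod.lift_desc, id_eq_add_boundarySummand e hpos m, add_assoc]
  inv_hom_id := by
    ext <;> simp [e.inv_f_comp_hom_f_of_single, inv_f_comp_boundarySummand_π,
      reassoc_of% f_comp_d_of_single, BoundarySummand.ι_hom_f, BoundarySummand.ι_π,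
      reassoc_of% BoundarySummand.ι_d, BoundarySummand.σ_hom_f _ (hpos 1 one_pos),
      σ_comp_boundarySummand_π, BoundarySummand.σ_d_π]

noncomputable def isoSumCx : X ≅ sumCx C M (fun j => (boundarySummand e hpos j).N) :=
  Hom.isoOfComponents (isoSumX e hpos) (by
    rintro i _ rfl
    rw [sumCx_d]
    change (isoSumX e hpos i).hom ≫ biprod.map 0 (biprod.snd ≫ biprod.inl) =
      X.d i (i + 1) ≫ (isoSumX e hpos (i + 1)).hom
    refine biprod.hom_ext _ _ ?_ (biprod.hom_ext _ _ ?_ ?_) <;>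
      simp [isoSumX, d_comp_f_of_single])

end

theorem stmt18 [IsIdempotentComplete C] (w : WeightStructure C)
    (M : C)
    (Mc : CochainComplex C ℤ)
    (hMcHeart : ∀ n : ℤ, n ≤ 0 → Mc.X n ∈ w.le ∧ Mc.X n ∈ w.ge)
    (hMcpos : ∀ n : ℤ, 0 < n → IsZero (Mc.X n))
    (e : HomotopyEquiv Mc ((HomologicalComplex.single C (ComplexShape.up ℤ) 0).obj M)) :
    ∃ N : ℤ → C,
      (∀ j : ℤ, j ≤ 0 → N j ∈ w.le ∧ N j ∈ w.ge) ∧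
      (∀ j : ℤ, 0 < j → IsZero (N j)) ∧
      Nonempty (Mc ≅ sumCx C M N) := by
  refine ⟨fun j => (boundarySummand e hMcpos j).N, fun j hj => ?_, fun j hj => ?_,
    ⟨isoSumCx e hMcpos⟩⟩
  · have ι_π := (boundarySummand e hMcpos j).ι_π
    exact ⟨w.le_retract (hMcHeart j hj).1 _ _ ι_π, w.ge_retract (hMcHeart j hj).2 _ _ ι_π⟩
  · let S := boundarySummand e hMcpos j
    rw [IsZero.iff_id_eq_zero, ← S.ι_π, (hMcpos j hj).eq_of_tgt S.ι 0, zero_comp]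
end
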